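/- arXiv:0902.0157 — 15 statements merged into one kernel-verified Lean document; each statement's English description precedes it below -/
import Mathlib

section
/- For all x, y in L, (x → y) ∨ x = 1. -/
/-- The derived implication `x → y := y ⊔ (1 ˆ (x ˆ y))` in a join-semilattice
with greatest element `⊤` and a binary operation `caret`. -/
def arr {L : Type*} [SemilatticeSup L] [OrderTop L] (caret : L → L → L) (x y : L) : L :=
  y ⊔ caret ⊤ (caret x y)

theorem stmt0 {L : Type*} [SemilatticeSup L] [OrderTop L] (caret : L → L → L)
    (ha : ∀ x y : L, x ⊔ caret y x = x ⊔ y)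
    (hb : ∀ x y : L, caret (caret ⊤ x) (caret ⊤ y) = caret ⊤ (caret x y))
    (hc : ∀ x : L, caret ⊤ (caret ⊤ x) = x)
    (hd : ∀ x y : L, x ≤ y → caret ⊤ x ≤ caret ⊤ y)
    (he1 : ∀ x y : L, arr caret (arr caret x y) y = x ⊔ y)
    (he2 : ∀ x y z : L, arr caret x (arr caret y z) = arr caret y (arr caret x z))
    (hf : ∀ x y : L, arr caret (x ⊔ y) (caret (x ⊔ y) y) = caret ⊤ (arr caret x y))
    (hg : ∀ x y : L, caret x y ≤ caret (x ⊔ y) y)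
    (hh : ∀ x y : L, caret x y ≤ x)
    : ∀ x y : L, arr caret x y ⊔ x = ⊤ := by
  intro x y
  have h1 : caret ⊤ (caret x y) ⊔ caret x y = ⊤ := by
    have := ha (caret ⊤ (caret x y)) ⊤
    rw [hc] at this
    simpa using this
  apply top_le_iff.mp
  calc ⊤ = caret ⊤ (caret x y) ⊔ caret x y := h1.symm
    _ ≤ arr caret x y ⊔ x :=
      sup_le (le_sup_of_le_left (by simp [arr])) (le_sup_of_le_right (hh x y))
end

section
/- For all x, y in L, (x → y) ˆ x ≤ 1 ˆ x. -/
theorem stmt1 {L : Type*} [SemilatticeSup L] [OrderTop L] (caret : L → L → L)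
    (ha : ∀ x y : L, x ⊔ caret y x = x ⊔ y)
    (hb : ∀ x y : L, caret (caret ⊤ x) (caret ⊤ y) = caret ⊤ (caret x y))
    (hc : ∀ x : L, caret ⊤ (caret ⊤ x) = x)
    (hd : ∀ x y : L, x ≤ y → caret ⊤ x ≤ caret ⊤ y)
    (he1 : ∀ x y : L, arr caret (arr caret x y) y = x ⊔ y)
    (he2 : ∀ x y z : L, arr caret x (arr caret y z) = arr caret y (arr caret x z))
    (hf : ∀ x y : L, arr caret (x ⊔ y) (caret (x ⊔ y) y) = caret ⊤ (arr caret x y))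
    (hg : ∀ x y : L, caret x y ≤ caret (x ⊔ y) y)
    (hh : ∀ x y : L, caret x y ≤ x)
    : ∀ x y : L, caret (arr caret x y) x ≤ caret ⊤ x := by
  intro x y
  -- From (a) with second argument ⊤: z ⊔ caret ⊤ z = ⊤
  have h1 : ∀ z : L, z ⊔ caret ⊤ z = (⊤ : L) := fun z => by
    have := ha z ⊤; simpa using this
  -- arr x y ⊔ x = ⊤
  have h2 : arr caret x y ⊔ x = (⊤ : L) := by
    apply le_antisymm le_top
    calc (⊤ : L) = caret x y ⊔ caret ⊤ (caret x y) := (h1 (caret x y)).symm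
      _ ≤ arr caret x y ⊔ x := by
          apply sup_le
          · exact le_trans (hh x y) le_sup_right
          · exact le_trans (le_sup_right : caret ⊤ (caret x y) ≤ arr caret x y) le_sup_left
  have h3 := hg (arr caret x y) x
  rwa [h2] at h3
end

section
/- For all x, y in L, (x → y) → x = x. -/
theorem stmt2 {L : Type*} [SemilatticeSup L] [OrderTop L] (caret : L → L → L)
    (ha : ∀ x y : L, x ⊔ caret y x = x ⊔ y)
    (hb : ∀ x y : L, caret (caret ⊤ x) (caret ⊤ y) = caret ⊤ (caret x y))
    (hc : ∀ x : L, caret ⊤ (caret ⊤ x) = x)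
    (hd : ∀ x y : L, x ≤ y → caret ⊤ x ≤ caret ⊤ y)
    (he1 : ∀ x y : L, arr caret (arr caret x y) y = x ⊔ y)
    (he2 : ∀ x y z : L, arr caret x (arr caret y z) = arr caret y (arr caret x z))
    (hf : ∀ x y : L, arr caret (x ⊔ y) (caret (x ⊔ y) y) = caret ⊤ (arr caret x y))
    (hg : ∀ x y : L, caret x y ≤ caret (x ⊔ y) y)
    (hh : ∀ x y : L, caret x y ≤ x)
    : ∀ x y : L, arr caret (arr caret x y) x = x := by
  intro x y
  -- Step 1: a ⊔ caret ⊤ a = ⊤ for all a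
  have h2 : ∀ a : L, a ⊔ caret ⊤ a = ⊤ := by
    intro a
    have := ha a ⊤
    simpa using this
  -- Step 2: arr caret x y ⊔ x = ⊤
  have hT : arr caret x y ⊔ x = ⊤ := by
    apply top_unique
    rw [← h2 (caret x y)]
    apply sup_le
    · exact le_trans (hh x y) (le_sup_right)
    · exact le_trans (le_sup_right.trans le_sup_left :
        caret ⊤ (caret x y) ≤ arr caret x y ⊔ x) le_rfl
  -- Step 3: use hf at (arr caret x y, x)
  have h3 := hf (arr caret x y) x
  rw [hT] at h3
  -- LHS of h3: arr caret ⊤ (caret ⊤ x) = caret ⊤ x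
  have h4 : arr caret ⊤ (caret ⊤ x) = caret ⊤ x := by
    unfold arr
    rw [hc]
    simp
  rw [h4] at h3
  -- h3 : caret ⊤ x = caret ⊤ (arr caret (arr caret x y) x)
  have := congrArg (caret ⊤) h3
  rw [hc, hc] at this
  exact this.symm
end

section
/- For all a, b in L with b ≤ a, a ˆ (a ˆ b) = b. (That is, defining Δ(a, b) := a ˆ b for b ≤ a, the map Δ(a, ·) is an involution of the segment below a.) -/
theorem stmt3 {L : Type*} [SemilatticeSup L] [OrderTop L] (caret : L → L → L)
    (ha : ∀ x y : L, x ⊔ caret y x = x ⊔ y)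
    (hb : ∀ x y : L, caret (caret ⊤ x) (caret ⊤ y) = caret ⊤ (caret x y))
    (hc : ∀ x : L, caret ⊤ (caret ⊤ x) = x)
    (hd : ∀ x y : L, x ≤ y → caret ⊤ x ≤ caret ⊤ y)
    (he1 : ∀ x y : L, arr caret (arr caret x y) y = x ⊔ y)
    (he2 : ∀ x y z : L, arr caret x (arr caret y z) = arr caret y (arr caret x z))
    (hf : ∀ x y : L, arr caret (x ⊔ y) (caret (x ⊔ y) y) = caret ⊤ (arr caret x y))
    (hg : ∀ x y : L, caret x y ≤ caret (x ⊔ y) y)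
    (hh : ∀ x y : L, caret x y ≤ x)
    : ∀ a b : L, b ≤ a → caret a (caret a b) = b := by
  -- N := caret ⊤ is a monotone involution, hence a sup-preserving bijection.
  have hNinj : ∀ x y : L, caret ⊤ x = caret ⊤ y → x = y := by
    intro x y h
    have := congrArg (caret ⊤) h
    rwa [hc, hc] at this
  have hNsup : ∀ x y : L, caret ⊤ (x ⊔ y) = caret ⊤ x ⊔ caret ⊤ y := by
    intro x y
    apply le_antisymm
    · have h1 : x ≤ caret ⊤ (caret ⊤ x ⊔ caret ⊤ y) := by
        have := hd (caret ⊤ x) (caret ⊤ x ⊔ caret ⊤ y) le_sup_left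
        rwa [hc] at this
      have h2 : y ≤ caret ⊤ (caret ⊤ x ⊔ caret ⊤ y) := by
        have := hd (caret ⊤ y) (caret ⊤ x ⊔ caret ⊤ y) le_sup_right
        rwa [hc] at this
      have := hd (x ⊔ y) (caret ⊤ (caret ⊤ x ⊔ caret ⊤ y)) (sup_le h1 h2)
      rwa [hc] at this
    · exact sup_le (hd x (x ⊔ y) le_sup_left) (hd y (x ⊔ y) le_sup_right)
  -- x ⊔ N x = ⊤
  have topN : ∀ x : L, x ⊔ caret ⊤ x = ⊤ := by
    intro x
    have := ha x ⊤
    simpa using this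
  -- arr ⊤ y = y
  have top_arr : ∀ y : L, arr caret ⊤ y = y := by
    intro y
    simp [arr, hc]
  -- arr depends only on x ⊔ y
  have L1 : ∀ x x' y : L, x ⊔ y = x' ⊔ y → arr caret x y = arr caret x' y := by
    intro x x' y h
    apply hNinj
    rw [← hf x y, ← hf x' y, h]
  -- y → y = ⊤
  have arr_self : ∀ y : L, arr caret y y = ⊤ := by
    intro y
    have := he1 ⊤ y
    rw [top_arr] at this
    simpa using this
  -- x ≤ y → x → y = ⊤
  have le_arr : ∀ x y : L, x ≤ y → arr caret x y = ⊤ := by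
    intro x y h
    have : x ⊔ y = y ⊔ y := by simp [sup_eq_right.mpr h]
    rw [L1 x y y this, arr_self]
  -- x → y = ⊤ → x ≤ y
  have arr_le : ∀ x y : L, arr caret x y = ⊤ → x ≤ y := by
    intro x y h
    have := he1 x y
    rw [h, top_arr] at this
    exact le_sup_left.trans this.ge
  intro a b hba
  set c := caret a b with hcdef
  set d := caret a c with hddef
  have hca : c ≤ a := hh a b
  have hda : d ≤ a := hh a c
  have hbc : b ⊔ c = a := by
    have := ha b a
    rwa [sup_eq_right.mpr hba, ← hcdef] at this
  have hcd : c ⊔ d = a := by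
    have := ha c a
    rwa [sup_eq_right.mpr hca, ← hddef] at this
  -- arr a c computed two ways
  have hab : a ⊔ b = a := sup_eq_left.mpr hba
  have hac : a ⊔ c = a := sup_eq_left.mpr hca
  have had : a ⊔ d = a := sup_eq_left.mpr hda
  have eq1 : c ⊔ caret ⊤ d = caret ⊤ b ⊔ c := by
    have h1 := hf a b
    rw [hab, ← hcdef] at h1
    -- h1 : arr caret a c = caret ⊤ (arr caret a b)
    have h2 : arr caret a c = c ⊔ caret ⊤ d := by simp [arr, hddef]
    have h3 : caret ⊤ (arr caret a b) = caret ⊤ b ⊔ c := by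
      show caret ⊤ (b ⊔ caret ⊤ (caret a b)) = _
      rw [hNsup, hc, ← hcdef]
    rw [h2, h3] at h1
    exact h1
  have eq2 : caret ⊤ c ⊔ d = b ⊔ caret ⊤ c := by
    have := congrArg (caret ⊤) eq1
    rw [hNsup, hNsup, hc, hc] at this
    exact this
  -- u := arr caret a b = b ⊔ N c
  have hu : arr caret a b = b ⊔ caret ⊤ c := by simp [arr, hcdef]
  have hdu : d ≤ arr caret a b := by
    rw [hu, ← eq2]
    exact le_sup_right
  have hbu : b ≤ arr caret a b := by rw [hu]; exact le_sup_left
  -- arr caret a d = arr caret a b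
  have harr_ad : arr caret a d = arr caret a b := by
    have h1 := hf a c
    rw [hac, ← hddef] at h1
    -- h1 : arr caret a d = caret ⊤ (arr caret a c)
    have h2 : arr caret a c = caret ⊤ b ⊔ c := by
      have h3 : arr caret a c = c ⊔ caret ⊤ d := by simp [arr, hddef]
      rw [h3, eq1]
    rw [h1, h2, hNsup, hc, hu]
  -- arr caret c b = arr caret a b,  arr caret c d = arr caret a d
  have hcb : arr caret c b = arr caret a b :=
    L1 c a b (by rw [sup_comm c b, hbc, hab])
  have hcd' : arr caret c d = arr caret a d :=
    L1 c a d (by rw [hcd, had])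
  -- arr caret (N c) b = a  and  arr caret (N c) d = a
  have hNcb : arr caret (caret ⊤ c) b = a := by
    have h1 : arr caret (caret ⊤ c) b = arr caret (arr caret a b) b := by
      apply L1
      rw [hu, sup_comm b (caret ⊤ c), sup_assoc, sup_idem]
    rw [h1, he1, hab]
  have hNcd : arr caret (caret ⊤ c) d = a := by
    have h1 : arr caret (caret ⊤ c) d = arr caret (arr caret a d) d := by
      apply L1
      rw [harr_ad, hu, ← eq2, sup_assoc, sup_idem]
    rw [h1, he1, had]
  -- c ≤ arr caret d b and N c ≤ arr caret d b
  have h5 : c ≤ arr caret d b := by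
    apply arr_le
    have := he2 d c b
    rw [hcb, le_arr d (arr caret a b) hdu] at this
    exact this.symm
  have h6 : caret ⊤ c ≤ arr caret d b := by
    apply arr_le
    have := he2 d (caret ⊤ c) b
    rw [hNcb, le_arr d a hda] at this
    exact this.symm
  have hdb : d ≤ b := by
    apply arr_le
    have : (⊤ : L) ≤ arr caret d b := by
      rw [← topN c]
      exact sup_le h5 h6
    exact top_le_iff.mp this
  -- symmetric direction
  have h7 : c ≤ arr caret b d := by
    apply arr_le
    have := he2 b c d
    rw [hcd', harr_ad, le_arr b (arr caret a b) hbu] at this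
    exact this.symm
  have h8 : caret ⊤ c ≤ arr caret b d := by
    apply arr_le
    have := he2 b (caret ⊤ c) d
    rw [hNcd, le_arr b a hba] at this
    exact this.symm
  have hbd : b ≤ d := by
    apply arr_le
    have : (⊤ : L) ≤ arr caret b d := by
      rw [← topN c]
      exact sup_le h7 h8
    exact top_le_iff.mp this
  exact le_antisymm hdb hbd
end

section
/- For all a, b, c in L with c ≤ b ≤ a, a ˆ c ≤ a ˆ b. (That is, defining Δ(a, x) := a ˆ x for x ≤ a, the map Δ(a, ·) is monotone on the segment below a.) -/
theorem stmt4 {L : Type*} [SemilatticeSup L] [OrderTop L] (caret : L → L → L)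
    (ha : ∀ x y : L, x ⊔ caret y x = x ⊔ y)
    (hb : ∀ x y : L, caret (caret ⊤ x) (caret ⊤ y) = caret ⊤ (caret x y))
    (hc : ∀ x : L, caret ⊤ (caret ⊤ x) = x)
    (hd : ∀ x y : L, x ≤ y → caret ⊤ x ≤ caret ⊤ y)
    (he1 : ∀ x y : L, arr caret (arr caret x y) y = x ⊔ y)
    (he2 : ∀ x y z : L, arr caret x (arr caret y z) = arr caret y (arr caret x z))
    (hf : ∀ x y : L, arr caret (x ⊔ y) (caret (x ⊔ y) y) = caret ⊤ (arr caret x y))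
    (hg : ∀ x y : L, caret x y ≤ caret (x ⊔ y) y)
    (hh : ∀ x y : L, caret x y ≤ x)
    : ∀ a b c : L, c ≤ b → b ≤ a → caret a c ≤ caret a b := by
  -- basic facts about `arr`
  have F2 : ∀ u v : L, v ≤ arr caret u v := by
    intro u v; simp only [arr]; exact le_sup_left
  have Ftop : ∀ v : L, arr caret ⊤ v = v := by
    intro v; simp [arr, hc]
  have F4 : ∀ v : L, arr caret v v = ⊤ := by
    intro v
    have h := he1 ⊤ v
    rw [Ftop v] at h
    simpa using h
  have F5 : ∀ u v : L, arr caret u (u ⊔ v) = ⊤ := by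
    intro u v
    have h2 := he2 u (arr caret u v) v
    rw [he1 u v] at h2
    rw [h2, F4]
  have F6 : ∀ u w : L, u ≤ w → arr caret u w = ⊤ := by
    intro u w h
    have := F5 u w
    rwa [sup_eq_right.mpr h] at this
  have F7 : ∀ u w : L, arr caret u w = ⊤ → u ≤ w := by
    intro u w h
    have h1 := he1 u w
    rw [h, Ftop] at h1
    exact le_sup_left.trans h1.ge
  have F9 : ∀ u v w : L, u ≤ v → arr caret v w ≤ arr caret u w := by
    intro u v w h
    apply F7
    have h2 := he2 u (arr caret v w) w
    rw [he1 v w] at h2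
    rw [← h2]
    exact F6 _ _ (h.trans le_sup_left)
  have F10 : ∀ x y z : L, y ≤ z → arr caret x y ≤ arr caret x z := by
    intro x y z h
    apply F7
    have key : x ≤ arr caret (arr caret x y) z := by
      have hz : arr caret (arr caret z y) y = z := by
        rw [he1]; exact sup_eq_left.mpr h
      calc x ≤ x ⊔ y := le_sup_left
        _ ≤ arr caret (arr caret z y) (x ⊔ y) := F2 _ _
        _ = arr caret (arr caret z y) (arr caret (arr caret x y) y) := by rw [he1]
        _ = arr caret (arr caret x y) (arr caret (arr caret z y) y) := he2 _ _ _
        _ = arr caret (arr caret x y) z := by rw [hz]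
    have h2 := he2 x (arr caret x y) z
    rw [F6 _ _ key] at h2
    exact h2.symm
  -- main proof
  intro a b c hcb hba
  have hba' : a ⊔ b = a := sup_eq_left.mpr hba
  -- h2 : a → (a ˆ b) = σ (a → b)
  have h2 : arr caret a (caret a b) = caret ⊤ (arr caret a b) := by
    have := hf a b; rwa [hba'] at this
  -- h4' : a ˆ c ≤ σ (a → b)
  have h4 : caret a c ≤ caret ⊤ (arr caret a c) := by
    have h0 : caret ⊤ (caret a c) ≤ arr caret a c := by
      simp only [arr]; exact le_sup_right
    have := hd _ _ h0
    rwa [hc] at this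
  have h1 : arr caret a c ≤ arr caret a b := F10 a c b hcb
  have h4' : caret a c ≤ caret ⊤ (arr caret a b) := h4.trans (hd _ _ h1)
  -- h5 : (σ (a → b)) → (a ˆ b) = a
  have h5 : arr caret (caret ⊤ (arr caret a b)) (caret a b) = a := by
    rw [← h2, he1, sup_eq_left.mpr (hh a b)]
  -- h6 : a ≤ (a ˆ c) → (a ˆ b)
  have h6 : a ≤ arr caret (caret a c) (caret a b) := by
    have := F9 _ _ (caret a b) h4'
    rwa [h5] at this
  -- h9 : a ≤ (σ b) → (a ˆ b)
  have h7 : caret ⊤ b ≤ caret ⊤ (arr caret a b) := hd _ _ (F2 a b)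
  have h8 : arr caret (caret ⊤ b) (arr caret a (caret a b)) = ⊤ := by
    rw [h2]; exact F6 _ _ h7
  have h9 : a ≤ arr caret (caret ⊤ b) (caret a b) := by
    apply F7
    rw [he2 a (caret ⊤ b) (caret a b)]
    exact h8
  -- h10 : σ b ≤ (a ˆ c) → (a ˆ b)
  have h10 : caret ⊤ b ≤ arr caret (caret a c) (caret a b) := by
    apply F7
    rw [he2 (caret ⊤ b) (caret a c) (caret a b)]
    exact F6 _ _ ((hh a c).trans h9)
  -- b ⊔ σ b = ⊤
  have hbtop : b ⊔ caret ⊤ b = ⊤ := by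
    have := ha b ⊤; simpa using this
  have h11 : arr caret (caret a c) (caret a b) = ⊤ := by
    apply top_le_iff.mp
    calc (⊤ : L) = b ⊔ caret ⊤ b := hbtop.symm
      _ ≤ arr caret (caret a c) (caret a b) :=
        sup_le (hba.trans h6) h10
  exact F7 _ _ h11
end

section
/- For all a, b, c in L with c ≤ b ≤ a, a ˆ (b ˆ c) = (a ˆ b) ˆ (a ˆ c). (That is, defining Δ(x, y) := x ˆ y for y ≤ x, one has Δ(a, Δ(b, c)) = Δ(Δ(a, b), Δ(a, c)).) -/
theorem stmt5 {L : Type*} [SemilatticeSup L] [OrderTop L] (caret : L → L → L)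
    (ha : ∀ x y : L, x ⊔ caret y x = x ⊔ y)
    (hb : ∀ x y : L, caret (caret ⊤ x) (caret ⊤ y) = caret ⊤ (caret x y))
    (hc : ∀ x : L, caret ⊤ (caret ⊤ x) = x)
    (hd : ∀ x y : L, x ≤ y → caret ⊤ x ≤ caret ⊤ y)
    (he1 : ∀ x y : L, arr caret (arr caret x y) y = x ⊔ y)
    (he2 : ∀ x y z : L, arr caret x (arr caret y z) = arr caret y (arr caret x z))
    (hf : ∀ x y : L, arr caret (x ⊔ y) (caret (x ⊔ y) y) = caret ⊤ (arr caret x y))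
    (hg : ∀ x y : L, caret x y ≤ caret (x ⊔ y) y)
    (hh : ∀ x y : L, caret x y ≤ x)
    : ∀ a b c : L, c ≤ b → b ≤ a → caret a (caret b c) = caret (caret a b) (caret a c) := by
  -- notation: σ x = caret ⊤ x
  have arr_def : ∀ x y : L, arr caret x y = y ⊔ caret ⊤ (caret x y) := fun _ _ => rfl
  -- σ is a monotone involution, hence an order isomorphism
  have hrefl : ∀ x y : L, caret ⊤ x ≤ caret ⊤ y → x ≤ y := by
    intro x y h
    have h2 := hd _ _ h
    rwa [hc, hc] at h2
  have hσtop : caret ⊤ (⊤ : L) = ⊤ := by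
    have h1 : caret ⊤ (caret ⊤ (⊤ : L)) ≤ caret ⊤ ⊤ := hd _ _ le_top
    rw [hc] at h1
    exact le_antisymm le_top h1
  have hjoin : ∀ s t : L, caret ⊤ (s ⊔ t) = caret ⊤ s ⊔ caret ⊤ t := by
    intro s t
    refine le_antisymm ?_ (sup_le (hd _ _ le_sup_left) (hd _ _ le_sup_right))
    refine hrefl _ _ ?_
    rw [hc]
    refine sup_le ?_ ?_
    · calc s = caret ⊤ (caret ⊤ s) := (hc s).symm
        _ ≤ caret ⊤ (caret ⊤ s ⊔ caret ⊤ t) := hd _ _ le_sup_left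
    · calc t = caret ⊤ (caret ⊤ t) := (hc t).symm
        _ ≤ caret ⊤ (caret ⊤ s ⊔ caret ⊤ t) := hd _ _ le_sup_right
  have hcompl : ∀ t : L, t ⊔ caret ⊤ t = ⊤ := by
    intro t; rw [ha t ⊤, sup_top_eq]
  -- σ commutes with arr
  have σarr : ∀ p q : L, arr caret (caret ⊤ p) (caret ⊤ q) = caret ⊤ (arr caret p q) := by
    intro p q
    rw [arr_def, arr_def, hb, hc, hjoin, hc]
  -- basic arrow facts
  have arrTop : ∀ x : L, arr caret ⊤ x = x := by
    intro x; rw [arr_def, hc, sup_idem]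
  have topArr : ∀ x : L, arr caret x ⊤ = ⊤ := by
    intro x; rw [arr_def, top_sup_eq]
  have selfArr : ∀ x : L, arr caret x x = ⊤ := by
    intro x
    have h := he1 ⊤ x
    rwa [arrTop, top_sup_eq] at h
  have le_of_arr : ∀ x y : L, arr caret x y = ⊤ → x ≤ y := by
    intro x y h
    have h1 := he1 x y
    rw [h, arrTop] at h1
    calc x ≤ x ⊔ y := le_sup_left
      _ = y := h1.symm
  have caret_self : ∀ x : L, caret x x = x := by
    intro x
    have h := hf x x
    rw [sup_idem, selfArr, hσtop] at h
    exact le_antisymm (hh x x) (le_of_arr _ _ h)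
  have arr_of_le : ∀ x y : L, x ≤ y → arr caret x y = ⊤ := by
    intro x y h
    have h1 := hf x y
    rw [sup_eq_right.mpr h, caret_self, selfArr] at h1
    calc arr caret x y = caret ⊤ (caret ⊤ (arr caret x y)) := (hc _).symm
      _ = caret ⊤ ⊤ := by rw [← h1]
      _ = ⊤ := hσtop
  have le_arr : ∀ x y : L, y ≤ arr caret x y := by
    intro x y; rw [arr_def]; exact le_sup_left
  -- arr is monotone in the second argument
  have mono : ∀ t u v : L, u ≤ v → arr caret t u ≤ arr caret t v := by
    intro t u v huv
    have h1 : arr caret (arr caret v u) u = v := by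
      rw [he1, sup_eq_left.mpr huv]
    calc arr caret t u ≤ arr caret (arr caret v u) (arr caret t u) := le_arr _ _
      _ = arr caret t (arr caret (arr caret v u) u) := (he2 _ _ _).symm
      _ = arr caret t v := by rw [h1]
  -- arr is antitone in the first argument
  have anti : ∀ s t v : L, s ≤ t → arr caret t v ≤ arr caret s v := by
    intro s t v hst
    refine le_of_arr _ _ ?_
    calc arr caret (arr caret t v) (arr caret s v)
        = arr caret s (arr caret (arr caret t v) v) := he2 _ _ _
      _ = arr caret s (t ⊔ v) := by rw [he1]
      _ = ⊤ := arr_of_le _ _ (hst.trans le_sup_left)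
  -- excluded middle : x ⊔ (x → y) = ⊤
  have em_sup : ∀ x y : L, x ⊔ arr caret x y = ⊤ := by
    intro x y
    refine le_antisymm le_top ?_
    calc (⊤ : L) = caret x y ⊔ caret ⊤ (caret x y) := (hcompl _).symm
      _ ≤ x ⊔ arr caret x y := sup_le_sup (hh x y) (by rw [arr_def]; exact le_sup_right)
  -- core cancellation lemma
  have core : ∀ x u t : L, u ≤ x → t ≤ x → t ≤ arr caret x u → t ≤ u := by
    intro x u t hux htx htxu
    refine le_of_arr _ _ ?_
    have h1 : arr caret x u ≤ arr caret t u := anti _ _ _ htx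
    have h2 : arr caret (arr caret x u) u ≤ arr caret t u := anti _ _ _ htxu
    rw [he1, sup_eq_left.mpr hux] at h2
    have : x ⊔ arr caret x u ≤ arr caret t u := sup_le h2 h1
    rw [em_sup] at this
    exact le_antisymm le_top this
  have cancel : ∀ x s u : L, s ≤ x → u ≤ x → arr caret x s = arr caret x u → s = u := by
    intro x s u hsx hux h
    refine le_antisymm ?_ ?_
    · exact core x u s hux hsx (le_trans (le_arr x s) (le_of_eq h))
    · exact core x s u hsx hux (le_trans (le_arr x u) (le_of_eq h.symm))
  -- sectional form of hf
  have hf' : ∀ x y : L, y ≤ x → arr caret x (caret x y) = caret ⊤ (arr caret x y) := by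
    intro x y h
    have h1 := hf x y
    rwa [sup_eq_left.mpr h] at h1
  -- caret x · is monotone on the section below x
  have T1 : ∀ x y z : L, z ≤ y → y ≤ x → caret x z ≤ caret x y := by
    intro x y z hzy hyx
    refine core x (caret x y) (caret x z) (hh _ _) (hh _ _) ?_
    rw [hf' x y hyx]
    calc caret x z ≤ caret ⊤ z ⊔ caret ⊤ (caret ⊤ (caret x z)) := by
          rw [hc]; exact le_sup_right
      _ = caret ⊤ (arr caret x z) := by rw [arr_def, hjoin]
      _ ≤ caret ⊤ (arr caret x y) := hd _ _ (mono _ _ _ hzy)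
  -- key lemma : (x ˆ y) → (x ˆ z) = σ (y → z)  for z ≤ y ≤ x
  have Kstar : ∀ x y z : L, z ≤ y → y ≤ x →
      arr caret (caret x y) (caret x z) = caret ⊤ (arr caret y z) := by
    intro x y z hzy hyx
    have hzx : z ≤ x := hzy.trans hyx
    have hxv : arr caret x (caret x z) = caret ⊤ (arr caret x z) := hf' x z hzx
    have hxu : arr caret x (caret x y) = caret ⊤ (arr caret x y) := hf' x y hyx
    -- v ≤ σ(x→z) ≤ S := σ(y→z)
    have P1a : caret x z ≤ caret ⊤ (arr caret x z) := by
      calc caret x z ≤ caret ⊤ z ⊔ caret ⊤ (caret ⊤ (caret x z)) := by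
            rw [hc]; exact le_sup_right
        _ = caret ⊤ (arr caret x z) := by rw [arr_def, hjoin]
    have P1b : caret ⊤ (arr caret x z) ≤ caret ⊤ (arr caret y z) :=
      hd _ _ (anti _ _ _ hyx)
    -- K5 : (y→z) → (x→z) = x→y
    have K5 : arr caret (arr caret y z) (arr caret x z) = arr caret x y := by
      calc arr caret (arr caret y z) (arr caret x z)
          = arr caret x (arr caret (arr caret y z) z) := he2 _ _ _
        _ = arr caret x (y ⊔ z) := by rw [he1]
        _ = arr caret x y := by rw [sup_eq_left.mpr hzy]
    -- S → v ≤ x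
    have hSv_le : arr caret (caret ⊤ (arr caret y z)) (caret x z) ≤ x := by
      calc arr caret (caret ⊤ (arr caret y z)) (caret x z)
          ≤ arr caret (caret ⊤ (arr caret x z)) (caret x z) := anti _ _ _ P1b
        _ = arr caret (arr caret x (caret x z)) (caret x z) := by rw [hxv]
        _ = x ⊔ caret x z := he1 _ _
        _ = x := sup_eq_left.mpr (hh x z)
    -- x → (S → v) = x → u
    have hstep : arr caret x (arr caret (caret ⊤ (arr caret y z)) (caret x z))
        = arr caret x (caret x y) := by
      calc arr caret x (arr caret (caret ⊤ (arr caret y z)) (caret x z))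
          = arr caret (caret ⊤ (arr caret y z)) (arr caret x (caret x z)) := he2 _ _ _
        _ = arr caret (caret ⊤ (arr caret y z)) (caret ⊤ (arr caret x z)) := by rw [hxv]
        _ = caret ⊤ (arr caret (arr caret y z) (arr caret x z)) := σarr _ _
        _ = caret ⊤ (arr caret x y) := by rw [K5]
        _ = arr caret x (caret x y) := hxu.symm
    have hSvu : arr caret (caret ⊤ (arr caret y z)) (caret x z) = caret x y :=
      cancel x _ _ hSv_le (hh x y) hstep
    calc arr caret (caret x y) (caret x z)
        = arr caret (arr caret (caret ⊤ (arr caret y z)) (caret x z)) (caret x z) := by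
          rw [hSvu]
      _ = caret ⊤ (arr caret y z) ⊔ caret x z := he1 _ _
      _ = caret ⊤ (arr caret y z) := sup_eq_left.mpr (P1a.trans P1b)
  -- main proof
  intro a b c hcb hba
  have hmb : caret b c ≤ b := hh b c
  have hvu : caret a c ≤ caret a b := T1 a b c hcb hba
  have hLu : caret a (caret b c) ≤ caret a b := T1 a b (caret b c) hmb hba
  refine cancel (caret a b) _ _ hLu (hh _ _) ?_
  have h1 : arr caret (caret a b) (caret a (caret b c)) = caret ⊤ (arr caret b (caret b c)) :=
    Kstar a b (caret b c) hmb hba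
  have h2 : arr caret b (caret b c) = caret ⊤ (arr caret b c) := hf' b c hcb
  have h3 : arr caret (caret a b) (caret (caret a b) (caret a c))
      = caret ⊤ (arr caret (caret a b) (caret a c)) := hf' (caret a b) (caret a c) hvu
  rw [h1, h2, hc, h3, Kstar a b c hcb hba, hc]
end

section
/- For all a, b in L, the pair of elements a and (a ∨ b) ˆ b has a greatest lower bound in L; that is, there exists z in L with z ≤ a, z ≤ (a ∨ b) ˆ b, and every w in L satisfying w ≤ a and w ≤ (a ∨ b) ˆ b also satisfies w ≤ z. -/
section Aux

variable {L : Type*} [SemilatticeSup L] [OrderTop L] (caret : L → L → L)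

theorem aux_le_arr (x y : L) : y ≤ arr caret x y := le_sup_left

theorem aux_top_arr (hc : ∀ x : L, caret ⊤ (caret ⊤ x) = x) (v : L) :
    arr caret ⊤ v = v := by
  simp [arr, hc v]

theorem aux_arr_self (hc : ∀ x : L, caret ⊤ (caret ⊤ x) = x)
    (he1 : ∀ x y : L, arr caret (arr caret x y) y = x ⊔ y) (v : L) :
    arr caret v v = ⊤ := by
  have h := he1 ⊤ v
  rw [aux_top_arr caret hc] at h
  simpa using h

theorem aux_arr_eq_top (hc : ∀ x : L, caret ⊤ (caret ⊤ x) = x)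
    (he1 : ∀ x y : L, arr caret (arr caret x y) y = x ⊔ y) {u v : L} (h : u ≤ v) :
    arr caret u v = ⊤ := by
  have h1 : arr caret (arr caret u v) v = v := by
    rw [he1 u v, sup_eq_right.mpr h]
  have h2 := he1 (arr caret u v) v
  rw [h1, aux_arr_self caret hc he1, sup_eq_left.mpr (aux_le_arr caret u v)] at h2
  exact h2.symm

theorem aux_le_of_arr (hc : ∀ x : L, caret ⊤ (caret ⊤ x) = x)
    (he1 : ∀ x y : L, arr caret (arr caret x y) y = x ⊔ y) {u v : L}
    (h : arr caret u v = ⊤) : u ≤ v := by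
  have h1 := he1 u v
  rw [h, aux_top_arr caret hc] at h1
  exact sup_eq_right.mp h1.symm

theorem aux_antitone (hc : ∀ x : L, caret ⊤ (caret ⊤ x) = x)
    (he1 : ∀ x y : L, arr caret (arr caret x y) y = x ⊔ y)
    (he2 : ∀ x y z : L, arr caret x (arr caret y z) = arr caret y (arr caret x z))
    {x x' : L} (y : L) (h : x ≤ x') : arr caret x' y ≤ arr caret x y := by
  apply aux_le_of_arr caret hc he1
  rw [he2 (arr caret x' y) x y, he1 x' y]
  exact aux_arr_eq_top caret hc he1 (le_sup_of_le_left h)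

end Aux

theorem stmt6 {L : Type*} [SemilatticeSup L] [OrderTop L] (caret : L → L → L)
    (ha : ∀ x y : L, x ⊔ caret y x = x ⊔ y)
    (hb : ∀ x y : L, caret (caret ⊤ x) (caret ⊤ y) = caret ⊤ (caret x y))
    (hc : ∀ x : L, caret ⊤ (caret ⊤ x) = x)
    (hd : ∀ x y : L, x ≤ y → caret ⊤ x ≤ caret ⊤ y)
    (he1 : ∀ x y : L, arr caret (arr caret x y) y = x ⊔ y)
    (he2 : ∀ x y z : L, arr caret x (arr caret y z) = arr caret y (arr caret x z))
    (hf : ∀ x y : L, arr caret (x ⊔ y) (caret (x ⊔ y) y) = caret ⊤ (arr caret x y))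
    (hg : ∀ x y : L, caret x y ≤ caret (x ⊔ y) y)
    (hh : ∀ x y : L, caret x y ≤ x)
    : ∀ a b : L, ∃ z : L, z ≤ a ∧ z ≤ caret (a ⊔ b) b ∧ ∀ w : L, w ≤ a → w ≤ caret (a ⊔ b) b → w ≤ z := by
  intro a b
  set c := caret (a ⊔ b) b with hcdef
  set d := caret a b with hddef
  have hda : d ≤ a := hh a b
  have hdc : d ≤ c := hg a b
  refine ⟨arr caret (arr caret a d ⊔ arr caret c d) d, ?_, ?_, ?_⟩
  · calc arr caret (arr caret a d ⊔ arr caret c d) d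
        ≤ arr caret (arr caret a d) d :=
          aux_antitone caret hc he1 he2 d le_sup_left
      _ = a ⊔ d := he1 a d
      _ = a := sup_eq_left.mpr hda
  · calc arr caret (arr caret a d ⊔ arr caret c d) d
        ≤ arr caret (arr caret c d) d :=
          aux_antitone caret hc he1 he2 d le_sup_right
      _ = c ⊔ d := he1 c d
      _ = c := sup_eq_left.mpr hdc
  · intro w hwa hwc
    set e := w ⊔ d with hedef
    have hea : e ≤ a := sup_le hwa hda
    have hec : e ≤ c := sup_le hwc hdc
    have h1 : arr caret a d ⊔ arr caret c d ≤ arr caret e d :=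
      sup_le (aux_antitone caret hc he1 he2 d hea) (aux_antitone caret hc he1 he2 d hec)
    have h2 : arr caret (arr caret e d) d ≤
        arr caret (arr caret a d ⊔ arr caret c d) d :=
      aux_antitone caret hc he1 he2 d h1
    rw [he1 e d] at h2
    exact le_trans (le_sup_left.trans le_sup_left) h2
end

section
/- Suppose additionally that L satisfies the axiom (i): (x ∨ y) ˆ y ≤ x → (x ˆ y) for all x, y. Then for all x, y in L, the element x ˆ y is the greatest lower bound of x and (x ∨ y) ˆ y; that is, x ˆ y ≤ x, x ˆ y ≤ (x ∨ y) ˆ y, and every w with w ≤ x and w ≤ (x ∨ y) ˆ y satisfies w ≤ x ˆ y. -/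
theorem stmt7 {L : Type*} [SemilatticeSup L] [OrderTop L] (caret : L → L → L)
    (ha : ∀ x y : L, x ⊔ caret y x = x ⊔ y)
    (hb : ∀ x y : L, caret (caret ⊤ x) (caret ⊤ y) = caret ⊤ (caret x y))
    (hc : ∀ x : L, caret ⊤ (caret ⊤ x) = x)
    (hd : ∀ x y : L, x ≤ y → caret ⊤ x ≤ caret ⊤ y)
    (he1 : ∀ x y : L, arr caret (arr caret x y) y = x ⊔ y)
    (he2 : ∀ x y z : L, arr caret x (arr caret y z) = arr caret y (arr caret x z))
    (hf : ∀ x y : L, arr caret (x ⊔ y) (caret (x ⊔ y) y) = caret ⊤ (arr caret x y))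
    (hg : ∀ x y : L, caret x y ≤ caret (x ⊔ y) y)
    (hh : ∀ x y : L, caret x y ≤ x)
    (hi : ∀ x y : L, caret (x ⊔ y) y ≤ arr caret x (caret x y))
    : ∀ x y : L, caret x y ≤ x ∧ caret x y ≤ caret (x ⊔ y) y ∧ ∀ w : L, w ≤ x → w ≤ caret (x ⊔ y) y → w ≤ caret x y := by
  -- basic facts
  have hvA : ∀ u v : L, v ≤ arr caret u v := fun u v => le_sup_left
  -- arr ⊤ v = v
  have hTv : ∀ v : L, arr caret ⊤ v = v := by
    intro v
    simp [arr, hc]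
  -- arr v v = ⊤
  have hvv : ∀ v : L, arr caret v v = ⊤ := by
    intro v
    have := he1 ⊤ v
    rwa [hTv v, top_sup_eq] at this
  -- u ≤ v → arr u v = ⊤
  have hle_top : ∀ u v : L, u ≤ v → arr caret u v = ⊤ := by
    intro u v huv
    have h1 : arr caret (arr caret u v) v = v := by
      rw [he1 u v, sup_eq_right.mpr huv]
    have h2 := he1 (arr caret u v) v
    rw [h1, hvv v, sup_eq_left.mpr (hvA u v)] at h2
    exact h2.symm
  -- arr u v = ⊤ → u ≤ v
  have htop_le : ∀ u v : L, arr caret u v = ⊤ → u ≤ v := by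
    intro u v huv
    have h := he1 u v
    rw [huv, hTv v] at h
    exact le_sup_left.trans h.ge
  -- z ⊔ caret ⊤ z = ⊤
  have hcompl : ∀ z : L, z ⊔ caret ⊤ z = ⊤ := by
    intro z
    have := ha z ⊤
    rwa [sup_top_eq] at this
  -- contraction: w ≤ arr w v → w ≤ v
  have hcontr : ∀ w v : L, w ≤ arr caret w v → w ≤ v := by
    intro w v hwA
    set A := arr caret w v with hA
    have hvleA : v ≤ A := hvA w v
    have h1 : arr caret A v = w ⊔ v := he1 w v
    have h2 : arr caret (w ⊔ v) v = A := by
      have := he1 A v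
      rw [h1, sup_eq_left.mpr hvleA] at this
      exact this
    have h3 : arr caret (w ⊔ v) (caret (w ⊔ v) v) = caret ⊤ A := by
      have := hf (w ⊔ v) v
      rw [sup_assoc, sup_idem, h2] at this
      exact this
    set q := caret (w ⊔ v) v with hq
    have hq_le : q ≤ caret ⊤ A := h3 ▸ hvA (w ⊔ v) q
    have hq' : caret ⊤ q ≤ A := by
      have := hd q (caret ⊤ A) hq_le
      rwa [hc A] at this
    have hqA : q ≤ A := (hh (w ⊔ v) v).trans (sup_le hwA hvleA)
    have hAtop : A = ⊤ := le_antisymm le_top ((hcompl q) ▸ sup_le hqA hq')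
    exact htop_le w v hAtop
  intro x y
  refine ⟨hh x y, hg x y, fun w hwx hws => ?_⟩
  -- w ≤ arr x (caret x y)
  have h1 : w ≤ arr caret x (caret x y) := hws.trans (hi x y)
  have h2 : arr caret w (arr caret x (caret x y)) = ⊤ := hle_top _ _ h1
  rw [he2 w x (caret x y)] at h2
  have h3 : x ≤ arr caret w (caret x y) := htop_le _ _ h2
  exact hcontr w (caret x y) (hwx.trans h3)
end

section
/- Let b and c be intervals of B. Then b ≃ c if and only if ℓ(b) = ℓ(c). -/
/-- The join of two intervals: `x ⊔ y = (x₀ ⊓ y₀, x₁ ⊔ y₁)`. -/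
def ijoin {B : Type*} [BooleanAlgebra B] (x y : B × B) : B × B :=
  (x.1 ⊓ y.1, x.2 ⊔ y.2)

/-- `Δ(x, y) = (x₀ ⊔ (x₁ ⊓ y₁ᶜ), x₁ ⊓ (x₀ ⊔ y₀ᶜ))`. -/
def idelta {B : Type*} [BooleanAlgebra B] (x y : B × B) : B × B :=
  (x.1 ⊔ (x.2 ⊓ y.2ᶜ), x.2 ⊓ (x.1 ⊔ y.1ᶜ))

/-- The length of an interval: `ℓ(x) = x₀ ⊔ x₁ᶜ`. -/
def ilen {B : Type*} [BooleanAlgebra B] (x : B × B) : B :=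
  x.1 ⊔ x.2ᶜ

/-- Caret: `x ˆ y = (x₀ ⊔ (x₁ ⊓ y₁ᶜ), x₀ ⊔ (x₁ ⊓ y₀ᶜ))`. -/
def icaret {B : Type*} [BooleanAlgebra B] (x y : B × B) : B × B :=
  (x.1 ⊔ (x.2 ⊓ y.2ᶜ), x.1 ⊔ (x.2 ⊓ y.1ᶜ))

/-- `x * y = x ⊔ Δ(x ⊔ y, y)`. -/
def istar {B : Type*} [BooleanAlgebra B] (x y : B × B) : B × B :=
  ijoin x (idelta (ijoin x y) y)

/-- Implication: `x ⇒ y = (y₀ ⊓ ℓ(x)ᶜ, y₁ ⊔ ℓ(x))`. -/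
def iimp {B : Type*} [BooleanAlgebra B] (x y : B × B) : B × B :=
  (y.1 ⊓ (ilen x)ᶜ, y.2 ⊔ ilen x)

/-- The relation `x ≃ y` iff `Δ(x ⊔ y, x) = y`. -/
def isim {B : Type*} [BooleanAlgebra B] (x y : B × B) : Prop :=
  idelta (ijoin x y) x = y


section
variable {B : Type*} [BooleanAlgebra B]

lemma fwd (a b c d : B) : ((a⊓c) ⊔ ((b⊔d)⊓bᶜ)) ⊔ ((b⊔d) ⊓ ((a⊓c)⊔aᶜ))ᶜ = a ⊔ bᶜ := by
  apply le_antisymm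
  · refine sup_le (sup_le ?_ ?_) ?_
    · exact inf_le_left.trans le_sup_left
    · rw [inf_sup_right, inf_compl_eq_bot, bot_sup_eq]
      exact inf_le_right.trans le_sup_right
    · rw [compl_inf, compl_sup, compl_sup, compl_inf, compl_compl]
      exact sup_le (inf_le_left.trans le_sup_right) (inf_le_right.trans le_sup_left)
  · refine sup_le ?_ ?_
    · have h : a = a⊓c ⊔ a⊓cᶜ := by rw [← inf_sup_left, sup_compl_eq_top, inf_top_eq]
      refine h.le.trans (sup_le (le_sup_left.trans le_sup_left) ?_)
      rw [compl_inf, compl_sup, compl_sup, compl_inf, compl_compl]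
      exact le_trans (le_inf (inf_le_right.trans le_sup_right) inf_le_left)
        (le_sup_right.trans le_sup_right)
    · have h : bᶜ = bᶜ⊓d ⊔ bᶜ⊓dᶜ := by rw [← inf_sup_left, sup_compl_eq_top, inf_top_eq]
      refine h.le.trans (sup_le ?_ ?_)
      · exact le_trans (le_inf (inf_le_right.trans le_sup_right) inf_le_left)
          (le_sup_right.trans le_sup_left)
      · rw [compl_inf, compl_sup]
        exact le_trans le_sup_left le_sup_right

lemma bwd1 {a b c d : B} (h : a ⊔ bᶜ = c ⊔ dᶜ) (hcd : c ≤ d) :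
    (a⊓c) ⊔ ((b⊔d)⊓bᶜ) = c := by
  have key : d ⊓ bᶜ ≤ c := by
    have h1 : d ⊓ bᶜ ≤ d ⊓ (c ⊔ dᶜ) := inf_le_inf_left d (h ▸ le_sup_right)
    rw [inf_sup_left, inf_compl_eq_bot, sup_bot_eq] at h1
    exact h1.trans inf_le_right
  apply le_antisymm
  · refine sup_le inf_le_right ?_
    rw [inf_sup_right, inf_compl_eq_bot, bot_sup_eq]
    exact key
  · have hc : c ≤ a ⊔ bᶜ := h.symm ▸ le_sup_left
    have : c = c ⊓ a ⊔ c ⊓ bᶜ := by rw [← inf_sup_left, inf_eq_left.2 hc]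
    refine this.le.trans (sup_le ((le_inf inf_le_right inf_le_left).trans le_sup_left) ?_)
    exact le_trans (le_inf ((inf_le_left.trans hcd).trans le_sup_right) inf_le_right) le_sup_right

lemma bwd2 {a b c d : B} (h : a ⊔ bᶜ = c ⊔ dᶜ) (hcd : c ≤ d) :
    (b⊔d) ⊓ ((a⊓c)⊔aᶜ) = d := by
  rw [sup_inf_right, sup_compl_eq_top, top_inf_eq]
  apply le_antisymm
  · rw [inf_sup_right]
    refine sup_le ?_ inf_le_left
    rw [inf_sup_left]
    refine sup_le (inf_le_right.trans hcd) ?_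
    have hba : b ⊓ aᶜ = (c ⊔ dᶜ)ᶜ := by rw [← h, compl_sup, compl_compl, inf_comm]
    rw [hba, compl_sup, compl_compl]
    exact inf_le_right
  · refine le_inf le_sup_right ?_
    have hda : d ⊓ a ≤ c := by
      have h1 : d ⊓ a ≤ d ⊓ (c ⊔ dᶜ) := inf_le_inf_left d (h ▸ le_sup_left)
      rw [inf_sup_left, inf_compl_eq_bot, sup_bot_eq] at h1
      exact h1.trans inf_le_right
    have : d = d ⊓ a ⊔ d ⊓ aᶜ := by rw [← inf_sup_left, sup_compl_eq_top, inf_top_eq]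
    exact this.le.trans (sup_le (hda.trans le_sup_left) (inf_le_right.trans le_sup_right))

end

theorem stmt9 {B : Type*} [BooleanAlgebra B] (b c : B × B)
    (hb : b.1 ≤ b.2) (hc : c.1 ≤ c.2) :
    isim b c ↔ ilen b = ilen c := by
  unfold isim idelta ijoin ilen
  rw [Prod.ext_iff]
  dsimp only
  constructor
  · rintro ⟨h1, h2⟩
    calc b.1 ⊔ b.2ᶜ
        = ((b.1⊓c.1) ⊔ ((b.2⊔c.2)⊓b.2ᶜ)) ⊔ ((b.2⊔c.2) ⊓ ((b.1⊓c.1)⊔b.1ᶜ))ᶜ :=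
          (fwd b.1 b.2 c.1 c.2).symm
      _ = c.1 ⊔ c.2ᶜ := by rw [h1, h2]
  · intro h
    exact ⟨bwd1 h hc, bwd2 h hc⟩
end

section
/- Let a and b be intervals of B. Then a ˆ b ≃ b ˆ a. -/
private lemma skipL1 {B : Type*} [BooleanAlgebra B] {x z : B} (y : B) (h : x ⊓ z = ⊥) :
    x ⊓ (y ⊓ z) = ⊥ := by rw [inf_left_comm, h, inf_bot_eq]

private lemma skipL2 {B : Type*} [BooleanAlgebra B] {x z : B} (y : B) (h : x ⊓ z = ⊥) :
    x ⊓ (z ⊓ y) = ⊥ := by rw [← inf_assoc, h, bot_inf_eq]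

private lemma key10 {B : Type*} [BooleanAlgebra B] (x0 x1 y0 y1 : B)
    (hy : y0 ≤ y1)
    (h1 : y1 ⊓ x1ᶜ ≤ y0) (h2 : y0 ⊓ x0ᶜ ≤ x1ᶜ)
    (h3 : y1 ⊓ x0 ≤ y0) (h4 : x1 ⊓ x0ᶜ ≤ y1) :
    isim (x0, x1) (y0, y1) := by
  simp only [isim, idelta, ijoin, Prod.mk.injEq]
  constructor
  · have e : (x1 ⊔ y1) ⊓ x1ᶜ = y1 ⊓ x1ᶜ := by
      rw [inf_sup_right, inf_compl_eq_bot, bot_sup_eq]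
    rw [e]
    apply le_antisymm
    · exact sup_le inf_le_right h1
    · have hs : y0 = y0 ⊓ x0 ⊔ y0 ⊓ x0ᶜ := by
        rw [← inf_sup_left, sup_compl_eq_top, inf_top_eq]
      conv_lhs => rw [hs]
      refine sup_le (le_sup_of_le_left ?_) (le_sup_of_le_right ?_)
      · exact le_inf inf_le_right inf_le_left
      · exact le_inf (le_trans inf_le_left hy) h2
  · have e : x0 ⊓ y0 ⊔ x0ᶜ = y0 ⊔ x0ᶜ := by
      rw [sup_comm, sup_inf_left, compl_sup_eq_top, top_inf_eq, sup_comm]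
    rw [e]
    apply le_antisymm
    · rw [inf_sup_right, inf_sup_left, inf_sup_left]
      exact sup_le (sup_le (le_trans inf_le_right hy) h4)
        (sup_le (le_trans inf_le_right hy) inf_le_left)
    · refine le_inf le_sup_right ?_
      have hs : y1 = y1 ⊓ x0 ⊔ y1 ⊓ x0ᶜ := by
        rw [← inf_sup_left, sup_compl_eq_top, inf_top_eq]
      conv_lhs => rw [hs]
      exact sup_le (le_sup_of_le_left h3) (le_sup_of_le_right inf_le_right)

set_option maxHeartbeats 1000000 in
theorem stmt10 {B : Type*} [BooleanAlgebra B] (a b : B × B)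
    (ha : a.1 ≤ a.2) (hb : b.1 ≤ b.2) :
    isim (icaret a b) (icaret b a) := by
  obtain ⟨a0, a1⟩ := a
  obtain ⟨b0, b1⟩ := b
  simp only at ha hb
  have ha' : a0 ⊓ a1ᶜ = ⊥ := by simpa [sdiff_eq] using sdiff_eq_bot_iff.2 ha
  have hb' : b0 ⊓ b1ᶜ = ⊥ := by simpa [sdiff_eq] using sdiff_eq_bot_iff.2 hb
  have ha'' : a1ᶜ ⊓ a0 = ⊥ := by rw [inf_comm]; exact ha'
  have hb'' : b1ᶜ ⊓ b0 = ⊥ := by rw [inf_comm]; exact hb'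
  simp only [icaret]
  apply key10 <;>
  · rw [← sdiff_eq_bot_iff, sdiff_eq]
    simp only [compl_sup, compl_inf, compl_compl, inf_sup_left, inf_sup_right]
    simp [ha', hb', ha'', hb'', inf_comm, inf_left_comm, inf_assoc, skipL1, skipL2]
end

section
/- Let a, b, c be intervals of B with b ≃ c. Then a ˆ b ≃ a ˆ c. -/
open scoped BooleanRingOfBooleanAlgebra symmDiff

section auxbr
variable {B : Type*} [BooleanAlgebra B]

private lemma inf_eq_mul' (a b : B) : a ⊓ b = a * b := rfl

private lemma compl_eq_one_add (a : B) : aᶜ = 1 + a := by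
  have h : (⊤ : B) ∆ a = aᶜ := by simp [symmDiff]
  rw [← h]; rfl

private lemma sup_eq_ring (a b : B) : a ⊔ b = a + b + a * b := by
  have h1 : (a ∆ b) ∆ (a ⊓ b) = a ⊔ b := by
    rw [(disjoint_symmDiff_inf a b).symmDiff_eq_sup, symmDiff_sup_inf]
  rw [← h1]; rfl

private lemma gap_icaret (p q r s : B) :
    (p ⊔ (q ⊓ sᶜ))ᶜ ⊓ (p ⊔ (q ⊓ rᶜ)) = pᶜ ⊓ q ⊓ (rᶜ ⊓ s) := by
  simp only [inf_eq_mul', sup_eq_ring, compl_eq_one_add]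
  linear_combination (1 + 2*q + q*s + q*r + q^2 + q^2*s + q^2*r + q^2*r*s) * (BooleanRing.mul_self (p : B)) + (1 + s + r + r*s + 3*p + 3*p*s + 3*p*r + 3*p*r*s) * (BooleanRing.mul_self (q : B)) + (q + q*r + p + 4*p*q + 2*p*q*s + 3*p*q*r + p*q*r*s) * (BooleanRing.add_self (1 : B))

private lemma isim_gap (r s u v : B) (hx : r ≤ s) (hy : u ≤ v)
    (h : isim (r, s) (u, v)) : rᶜ ⊓ s = uᶜ ⊓ v := by
  replace hx : r * s = r := by rw [← inf_eq_mul']; exact inf_eq_left.mpr hx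
  replace hy : u * v = u := by rw [← inf_eq_mul']; exact inf_eq_left.mpr hy
  simp only [isim, idelta, ijoin, Prod.mk.injEq] at h
  obtain ⟨h1, h2⟩ := h
  simp only [inf_eq_mul', sup_eq_ring, compl_eq_one_add] at h1 h2 ⊢
  linear_combination (r*v + r*u*v + r*s*v + r*s*u*v) * hx + (s*u + s*u*v + r*s*u + r*s*u*v) * hy + (v + u*v + s*v + r*v + r*u*v + r*s*v) * h1 + (s + s*v + s*u + s*u*v + r*s + r*s*u) * h2 + (v - u*v^2 - u^2*v - u^2*v^2 - s*v - 7*s*u*v - 4*s*u*v^2 - 5*s*u^2*v - 3*s*u^2*v^2 - s^2 - 2*s^2*v - 5*s^2*u - 9*s^2*u*v - 4*s^2*u*v^2 - 4*s^2*u^2 - 6*s^2*u^2*v - 2*s^2*u^2*v^2 - s^3*u*v - s^3*u*v^2 - r*s*u*v - r*s*u^2*v - r*s^2*u - r*s^2*u*v - r*s^2*u^2 - r*s^2*u^2*v) * (BooleanRing.mul_self (r : B)) + (-1 - 5*v - 5*v^2 - u - 3*u*v - 2*u*v^2 - s*v - s*v^2 - 3*r - 8*r*v - 5*r*v^2 -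 9*r*u - 21*r*u*v - 13*r*u*v^2 - 6*r*u^2 - 11*r*u^2*v - 5*r*u^2*v^2 - r*s*v - r*s*v^2 - 2*r*s*u*v - 2*r*s*u*v^2) * (BooleanRing.mul_self (s : B)) + (v + s - s*v^2 - r*v - 2*r*v^2 - 5*r*s - 19*r*s*v - 13*r*s*v^2) * (BooleanRing.mul_self (u : B)) + (-1 - u - 8*s - 5*s*u - r - 5*r*u - 9*r*s - 38*r*s*u) * (BooleanRing.mul_self (v : B)) + (-v - 7*s*v - 4*s*u*v - 3*r*u*v - r*s - 10*r*s*v - 7*r*s*u - 45*r*s*u*v) * (BooleanRing.add_self (1 : B))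

private lemma gap_isim (r s u v : B) (hx : r ≤ s) (hy : u ≤ v)
    (hg : rᶜ ⊓ s = uᶜ ⊓ v) : isim (r, s) (u, v) := by
  replace hx : r * s = r := by rw [← inf_eq_mul']; exact inf_eq_left.mpr hx
  replace hy : u * v = u := by rw [← inf_eq_mul']; exact inf_eq_left.mpr hy
  simp only [inf_eq_mul', compl_eq_one_add] at hg
  simp only [isim, idelta, ijoin, Prod.mk.injEq]
  constructor
  · simp only [inf_eq_mul', sup_eq_ring, compl_eq_one_add]
    linear_combination (r*v + r*u*v + r*s*v + r*s*u*v) * hx + (u + u*v + r*u + r*u*v) * hy + (v + u*v + s*v + r*v + r*u*v + r*s*v) * hg + (v + u*v - s*v - s*u*v - 2*s^2*v - s^2*u*v) * (BooleanRing.mul_self (r : B)) + (1 - 4*r*v + r*u) * (BooleanRing.mul_self (s : B)) + (1 + r) * (BooleanRing.mul_self (u : B)) + (1 + 2*u + s + s*u + r + 2*r*u + r*s + r*s*u) * (BooleanRing.mul_self (v : B)) + (v + u*v + s + s*v + r*v + r*u + 2*r*u*v - 3*r*s*v + r*s*u) * (BooleanRing.add_self (1 : B))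
  · simp only [inf_eq_mul', sup_eq_ring, compl_eq_one_add]
    linear_combination (r*v + r*u*v + r*s*v + r*s*u*v) * hx + (s*u + s*u*v) * hy + (s + s*v + s*u + s*u*v + r*s + r*s*u) * hg + (v + 2*u*v + s*u + s*u*v - s^2 - s^2*v - s^2*u - s^2*u*v) * (BooleanRing.mul_self (r : B)) + (-1 - v - u - u*v - 3*r - 2*r*v - 3*r*u - 2*r*u*v) * (BooleanRing.mul_self (s : B)) + (s + s*v + r*s*v) * (BooleanRing.mul_self (u : B)) + (s + 2*s*u) * (BooleanRing.mul_self (v : B)) + (s*v + 2*s*u*v + r*v + 2*r*u*v - r*s + 2*r*s*u*v) * (BooleanRing.add_self (1 : B))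

end auxbr

theorem stmt11 {B : Type*} [BooleanAlgebra B] (a b c : B × B)
    (ha : a.1 ≤ a.2) (hb : b.1 ≤ b.2) (hc : c.1 ≤ c.2)
    (hbc : isim b c) :
    isim (icaret a b) (icaret a c) := by
  have hab : (icaret a b).1 ≤ (icaret a b).2 :=
    sup_le_sup_left (inf_le_inf_left a.2 (compl_le_compl hb)) a.1
  have hac : (icaret a c).1 ≤ (icaret a c).2 :=
    sup_le_sup_left (inf_le_inf_left a.2 (compl_le_compl hc)) a.1
  have hgap : (icaret a b).1ᶜ ⊓ (icaret a b).2 = (icaret a c).1ᶜ ⊓ (icaret a c).2 := by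
    simp only [icaret]
    rw [gap_icaret, gap_icaret]
    exact congrArg (fun z => a.1ᶜ ⊓ a.2 ⊓ z) (isim_gap b.1 b.2 c.1 c.2 hb hc hbc)
  exact gap_isim _ _ _ _ hab hac hgap
end

section
/- Let a, b, c, d be intervals of B with a ≃ d and b ≃ c. Then a ˆ b ≃ d ˆ c. -/
section
variable {B : Type*} [BooleanAlgebra B]

lemma myhelp {a b c : B} (h : c ⊓ a ≤ b) : c ≤ aᶜ ⊔ b := by
  have : c \ aᶜ ≤ b := by rwa [sdiff_eq, compl_compl]
  simpa [sup_comm] using sdiff_le_iff.mp this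

lemma len_eq {x0 x1 y0 y1 : B}
    (e1 : x0 ⊓ y0 ⊔ (x1 ⊔ y1) ⊓ x1ᶜ = y0)
    (e2 : (x1 ⊔ y1) ⊓ (x0 ⊓ y0 ⊔ x0ᶜ) = y1) :
    x0 ⊔ x1ᶜ = y0 ⊔ y1ᶜ := by
  have h1 : y1 ⊓ x1ᶜ ≤ y0 := by
    rw [← e1]; exact le_sup_of_le_right (inf_le_inf_right _ le_sup_right)
  have h2 : y1 ⊓ x0 ≤ y0 := by
    have hy1 : y1 ≤ x0 ⊓ y0 ⊔ x0ᶜ := e2 ▸ inf_le_right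
    calc y1 ⊓ x0 ≤ (x0 ⊓ y0 ⊔ x0ᶜ) ⊓ x0 := inf_le_inf_right _ hy1
    _ ≤ y0 := by rw [inf_sup_right]; simp [inf_assoc, inf_comm, inf_le_right]
  have hle : x0 ⊔ x1ᶜ ≤ y0 ⊔ y1ᶜ := by
    have h3 : y1 ⊓ (x0 ⊔ x1ᶜ) ≤ y0 := by
      rw [inf_sup_left]; exact sup_le h2 h1
    have := myhelp (inf_comm y1 (x0 ⊔ x1ᶜ) ▸ h3)
    simpa [sup_comm] using this
  have hge : y0 ⊔ y1ᶜ ≤ x0 ⊔ x1ᶜ := by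
    have hy0 : y0 ≤ x0 ⊔ x1ᶜ := by
      rw [← e1]; exact sup_le (le_sup_of_le_left inf_le_left) (le_sup_of_le_right inf_le_right)
    have hy1c : y1ᶜ ≤ x0 ⊔ x1ᶜ := by
      have h4 : x0ᶜ ⊓ x1 ≤ y1 := by
        rw [← e2]
        exact le_inf (le_sup_of_le_left inf_le_right) (le_sup_of_le_right inf_le_left)
      have := compl_le_compl h4
      simpa [compl_inf, compl_compl, sup_comm] using this
    exact sup_le hy0 hy1c
  exact le_antisymm hle hge

lemma len_eq' {x0 x1 y0 y1 : B} (hx : x0 ≤ x1) (hy : y0 ≤ y1)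
    (hl : x0 ⊔ x1ᶜ = y0 ⊔ y1ᶜ) :
    x0 ⊓ y0 ⊔ (x1 ⊔ y1) ⊓ x1ᶜ = y0 ∧ (x1 ⊔ y1) ⊓ (x0 ⊓ y0 ⊔ x0ᶜ) = y1 := by
  have hy0 : y0 ≤ x0 ⊔ x1ᶜ := by rw [hl]; exact le_sup_left
  have hx1c : x1ᶜ ≤ y0 ⊔ y1ᶜ := hl ▸ le_sup_right
  have hx0 : x0 ≤ y0 ⊔ y1ᶜ := hl ▸ le_sup_left
  have hfat : x0ᶜ ⊓ x1 ≤ y1 := by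
    have : y1ᶜ ≤ x0 ⊔ x1ᶜ := hl.symm ▸ le_sup_right
    have := compl_le_compl this
    simpa [compl_sup, compl_compl] using this
  have hy1x0 : y1 ⊓ x0 ≤ y0 := by
    calc y1 ⊓ x0 ≤ y1 ⊓ (y0 ⊔ y1ᶜ) := inf_le_inf_left _ hx0
    _ ≤ y0 := by rw [inf_sup_left]; simp [inf_le_right]
  constructor
  · apply le_antisymm
    · apply sup_le inf_le_right
      rw [inf_sup_right]
      apply sup_le (by simp)
      calc y1 ⊓ x1ᶜ ≤ y1 ⊓ (y0 ⊔ y1ᶜ) := inf_le_inf_left _ hx1c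
      _ ≤ y0 := by rw [inf_sup_left]; simp [inf_le_right]
    · calc y0 = y0 ⊓ (x0 ⊔ x1ᶜ) := (inf_eq_left.mpr hy0).symm
      _ = y0 ⊓ x0 ⊔ y0 ⊓ x1ᶜ := inf_sup_left ..
      _ ≤ x0 ⊓ y0 ⊔ (x1 ⊔ y1) ⊓ x1ᶜ :=
        sup_le_sup (inf_comm y0 x0).le (inf_le_inf_right _ (le_sup_of_le_right hy))
  · apply le_antisymm
    · rw [inf_sup_left]
      apply sup_le (le_trans inf_le_right (inf_le_right.trans hy))
      rw [inf_sup_right]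
      apply sup_le ((inf_comm x1 x0ᶜ).le.trans hfat) inf_le_left
    · apply le_inf le_sup_right
      calc y1 = y1 ⊓ x0 ⊔ y1 ⊓ x0ᶜ := by rw [← inf_sup_left]; simp
      _ ≤ x0 ⊓ y0 ⊔ x0ᶜ := sup_le_sup (le_inf inf_le_right hy1x0) inf_le_right

lemma isim_iff_len (x y : B × B) (hx : x.1 ≤ x.2) (hy : y.1 ≤ y.2) :
    isim x y ↔ ilen x = ilen y := by
  simp only [isim, idelta, ijoin, ilen, Prod.mk.injEq, Prod.ext_iff]
  constructor
  · rintro ⟨e1, e2⟩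
    exact len_eq e1 e2
  · intro h
    exact len_eq' hx hy h

lemma icaret_interval (x y : B × B) (hx : x.1 ≤ x.2) (hy : y.1 ≤ y.2) :
    (icaret x y).1 ≤ (icaret x y).2 :=
  sup_le_sup_left (inf_le_inf_left _ (compl_le_compl hy)) _

lemma len_caret' {x0 x1 y0 y1 : B} (hx : x0 ≤ x1) :
    (x0 ⊔ x1 ⊓ y1ᶜ) ⊔ (x0 ⊔ x1 ⊓ y0ᶜ)ᶜ = (x0 ⊔ x1ᶜ) ⊔ (y0 ⊔ y1ᶜ) := by
  have hc : (x0 ⊔ x1 ⊓ y0ᶜ)ᶜ = x0ᶜ ⊓ (x1ᶜ ⊔ y0) := by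
    rw [compl_sup, compl_inf, compl_compl]
  rw [hc]
  apply le_antisymm
  · apply sup_le (sup_le (le_sup_of_le_left le_sup_left) _) _
    · exact le_sup_of_le_right (le_sup_of_le_right inf_le_right)
    · calc x0ᶜ ⊓ (x1ᶜ ⊔ y0) ≤ x1ᶜ ⊔ y0 := inf_le_right
      _ ≤ _ := sup_le (le_sup_of_le_left le_sup_right) (le_sup_of_le_right le_sup_left)
  · have hx1c : x1ᶜ ≤ x0ᶜ ⊓ (x1ᶜ ⊔ y0) := le_inf (compl_le_compl hx) le_sup_left
    apply sup_le (sup_le (le_sup_of_le_left le_sup_left) (le_sup_of_le_right hx1c))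
    apply sup_le
    · calc y0 = y0 ⊓ x0 ⊔ y0 ⊓ x0ᶜ := by rw [← inf_sup_left]; simp
      _ ≤ x0 ⊔ x0ᶜ ⊓ (x1ᶜ ⊔ y0) :=
        sup_le_sup inf_le_right (le_inf inf_le_right (le_sup_of_le_right inf_le_left))
      _ ≤ _ := sup_le (le_sup_of_le_left le_sup_left) le_sup_right
    · calc y1ᶜ = y1ᶜ ⊓ x1 ⊔ y1ᶜ ⊓ x1ᶜ := by rw [← inf_sup_left]; simp
      _ ≤ (x0 ⊔ x1 ⊓ y1ᶜ) ⊔ x0ᶜ ⊓ (x1ᶜ ⊔ y0) :=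
        sup_le_sup (le_sup_of_le_right (inf_comm y1ᶜ x1).le) (inf_le_right.trans hx1c)

lemma len_caret (x y : B × B) (hx : x.1 ≤ x.2) :
    ilen (icaret x y) = ilen x ⊔ ilen y := by
  simp only [ilen, icaret]
  exact len_caret' hx

end

theorem stmt12 {B : Type*} [BooleanAlgebra B] (a b c d : B × B)
    (ha : a.1 ≤ a.2) (hb : b.1 ≤ b.2) (hc : c.1 ≤ c.2) (hd : d.1 ≤ d.2)
    (had : isim a d) (hbc : isim b c) :
    isim (icaret a b) (icaret d c) := by
  have h1 := icaret_interval a b ha hb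
  have h2 := icaret_interval d c hd hc
  rw [isim_iff_len _ _ h1 h2, len_caret a b ha, len_caret d c hd,
    (isim_iff_len a d ha hd).mp had, (isim_iff_len b c hb hc).mp hbc]
end

section
/- Let a and b be intervals of B. Then a * b ≃ b * a. -/
section Aux
variable {B : Type*} [BooleanAlgebra B]

lemma aux_L1 (u v : B) : (u ⊔ v) ⊓ vᶜ = u ⊓ vᶜ := by rw [inf_sup_right]; simp
lemma aux_L2 (u v : B) : (u ⊓ v) ⊔ vᶜ = u ⊔ vᶜ := by rw [sup_inf_right]; simp

lemma aux_star_closed (x y : B × B) (hx : x.1 ≤ x.2) (hy : y.1 ≤ y.2) :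
    istar x y = (x.1 ⊓ ilen y, x.2 ⊔ (ilen y)ᶜ) := by
  obtain ⟨a0, a1⟩ := x
  obtain ⟨b0, b1⟩ := y
  simp only [istar, ijoin, idelta, ilen] at *
  refine Prod.ext ?_ ?_
  · show a0 ⊓ (a0 ⊓ b0 ⊔ (a1 ⊔ b1) ⊓ b1ᶜ) = a0 ⊓ (b0 ⊔ b1ᶜ)
    have h1 : a0 ⊓ a1 = a0 := inf_eq_left.mpr hx
    simp [inf_sup_left, inf_sup_right, ← inf_assoc, h1, inf_right_comm a0 a1]
  · show a1 ⊔ (a1 ⊔ b1) ⊓ (a0 ⊓ b0 ⊔ b0ᶜ) = a1 ⊔ (b0 ⊔ b1ᶜ)ᶜ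
    have h : a1 ⊔ b1 ⊓ (a0 ⊓ b0) = a1 :=
      sup_eq_left.mpr (le_trans (le_trans inf_le_right inf_le_left) hx)
    simp [inf_sup_left, inf_sup_right, sup_assoc, compl_sup, inf_comm b1 b0ᶜ, hy,
      ← sup_assoc, h]

lemma aux_goal1 (a0 a1 b0 b1 p q : B) (hb : b0 ≤ b1)
    (hp : p = b0 ⊔ b1ᶜ) (hq : q = a0 ⊔ a1ᶜ) :
    (a0 ⊓ p) ⊓ (b0 ⊓ q) ⊔ ((a1 ⊔ pᶜ) ⊔ (b1 ⊔ qᶜ)) ⊓ (a1 ⊔ pᶜ)ᶜ = b0 ⊓ q := by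
  have hqc : qᶜ ≤ a1 := by rw [hq, compl_sup, compl_compl]; exact inf_le_right
  have e1 : (a0 ⊓ p) ⊓ (b0 ⊓ q) = a0 ⊓ b0 := by
    rw [inf_inf_inf_comm, inf_eq_left.mpr (le_inf
      (hp ▸ le_trans inf_le_right le_sup_left) (hq ▸ le_trans inf_le_left le_sup_left))]
  have e3 : qᶜ ⊓ (a1ᶜ ⊓ p) = ⊥ :=
    le_bot_iff.mp ((inf_le_inf hqc inf_le_left).trans_eq (inf_compl_self a1))
  have e4 : b1 ⊓ (a1ᶜ ⊓ p) = b0 ⊓ a1ᶜ := by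
    rw [inf_left_comm, hp, inf_sup_left, inf_compl_self, sup_bot_eq,
      inf_eq_right.mpr hb, inf_comm]
  have e2 : ((a1 ⊔ pᶜ) ⊔ (b1 ⊔ qᶜ)) ⊓ (a1 ⊔ pᶜ)ᶜ = b0 ⊓ a1ᶜ := by
    rw [sup_comm (a1 ⊔ pᶜ), aux_L1, compl_sup, compl_compl, inf_sup_right, e3, e4,
      sup_bot_eq]
  rw [e1, e2, inf_comm a0 b0, ← inf_sup_left, ← hq]

lemma aux_goal2 (a0 a1 b0 b1 p q : B) (hb : b0 ≤ b1)
    (hp : p = b0 ⊔ b1ᶜ) (hq : q = a0 ⊔ a1ᶜ) :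
    ((a1 ⊔ pᶜ) ⊔ (b1 ⊔ qᶜ)) ⊓ ((a0 ⊓ p) ⊓ (b0 ⊓ q) ⊔ (a0 ⊓ p)ᶜ) = b1 ⊔ qᶜ := by
  have hpc : pᶜ ≤ b1 := by rw [hp, compl_sup, compl_compl]; exact inf_le_right
  have hqc : qᶜ ≤ a1 := by rw [hq, compl_sup, compl_compl]; exact inf_le_right
  have g1 : (a1 ⊔ pᶜ) ⊔ (b1 ⊔ qᶜ) = b1 ⊔ a1 := by
    rw [sup_sup_sup_comm, sup_eq_left.mpr
      (sup_le (le_sup_of_le_right hpc) (le_sup_of_le_left hqc)), sup_comm]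
  have e1 : (a0 ⊓ p) ⊓ (b0 ⊓ q) = a0 ⊓ b0 := by
    rw [inf_inf_inf_comm, inf_eq_left.mpr (le_inf
      (hp ▸ le_trans inf_le_right le_sup_left) (hq ▸ le_trans inf_le_left le_sup_left))]
  have g2 : (a0 ⊓ p) ⊓ (b0 ⊓ q) ⊔ (a0 ⊓ p)ᶜ = b1 ⊔ a0ᶜ := by
    rw [e1, compl_inf, ← sup_assoc, inf_comm a0 b0, aux_L2, sup_right_comm, hp,
      compl_sup, compl_compl, sup_inf_left, sup_compl_eq_top, top_inf_eq,
      sup_eq_right.mpr hb]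
  rw [g1, g2, ← sup_inf_left, hq, compl_sup, compl_compl, inf_comm]

end Aux

theorem stmt14 {B : Type*} [BooleanAlgebra B] (a b : B × B)
    (ha : a.1 ≤ a.2) (hb : b.1 ≤ b.2) :
    isim (istar a b) (istar b a) := by
  rw [isim, aux_star_closed a b ha hb, aux_star_closed b a hb ha]
  simp only [ijoin, idelta]
  refine Prod.ext ?_ ?_
  · exact aux_goal1 a.1 a.2 b.1 b.2 (ilen b) (ilen a) hb rfl rfl
  · exact aux_goal2 a.1 a.2 b.1 b.2 (ilen b) (ilen a) hb rfl rfl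
end

section
/- Let a, b, c be intervals of B with b ≃ c. Then b ⇒ a = c ⇒ a (componentwise equality) and a ⇒ b ≃ a ⇒ c. -/
private lemma aux_len {B : Type*} [BooleanAlgebra B] (p q r s : B)
    (hA : p ⊓ r ⊔ s ⊓ qᶜ = r) (hB : (q ⊔ s) ⊓ (r ⊔ pᶜ) = s) :
    p ⊔ qᶜ = r ⊔ sᶜ := by
  apply le_antisymm
  · apply sup_le
    · have h1 : s ⊓ p ≤ r := by
        calc s ⊓ p ≤ (r ⊔ pᶜ) ⊓ p := by
              exact inf_le_inf_right p (hB ▸ inf_le_right)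
          _ = r ⊓ p := by rw [inf_sup_right]; simp
          _ ≤ r := inf_le_left
      calc p = p ⊓ s ⊔ p ⊓ sᶜ := by rw [← inf_sup_left]; simp
        _ ≤ r ⊔ sᶜ := sup_le_sup (by rw [inf_comm]; exact h1) inf_le_right
    · have h2 : qᶜ ⊓ s ≤ r := by
        calc qᶜ ⊓ s = s ⊓ qᶜ := inf_comm ..
          _ ≤ r := hA ▸ le_sup_right
      calc qᶜ = qᶜ ⊓ s ⊔ qᶜ ⊓ sᶜ := by rw [← inf_sup_left]; simp
        _ ≤ r ⊔ sᶜ := sup_le_sup h2 inf_le_right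
  · apply sup_le
    · calc r = p ⊓ r ⊔ s ⊓ qᶜ := hA.symm
        _ ≤ p ⊔ qᶜ := sup_le_sup inf_le_left inf_le_right
    · have h3 : sᶜ ⊓ q ≤ p := by
        have : q ⊓ (r ⊔ pᶜ) ≤ s := hB ▸ inf_le_inf_right _ le_sup_left
        have := compl_le_compl this
        calc sᶜ ⊓ q = sᶜ \ qᶜ := by simp [sdiff_eq]
          _ ≤ (q ⊓ (r ⊔ pᶜ))ᶜ \ qᶜ := sdiff_le_sdiff_right this
          _ = (qᶜ ⊔ (rᶜ ⊓ p)) ⊓ q := by simp [sdiff_eq]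
          _ ≤ p := by rw [inf_sup_right]; simp; exact le_trans inf_le_left inf_le_right
      calc sᶜ = sᶜ ⊓ q ⊔ sᶜ ⊓ qᶜ := by rw [← inf_sup_left]; simp
        _ ≤ p ⊔ qᶜ := sup_le_sup h3 inf_le_right

private lemma aux_fst {B : Type*} [BooleanAlgebra B] (p q r s L : B)
    (hA : p ⊓ r ⊔ s ⊓ qᶜ = r) :
    p ⊓ Lᶜ ⊓ (r ⊓ Lᶜ) ⊔ (q ⊔ L ⊔ (s ⊔ L)) ⊓ (q ⊔ L)ᶜ = r ⊓ Lᶜ := by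
  have e1 : p ⊓ Lᶜ ⊓ (r ⊓ Lᶜ) = p ⊓ r ⊓ Lᶜ := by
    rw [inf_assoc, inf_comm Lᶜ, inf_assoc, inf_idem, ← inf_assoc]
  have e2 : (q ⊔ L ⊔ (s ⊔ L)) ⊓ (q ⊔ L)ᶜ = s ⊓ qᶜ ⊓ Lᶜ := by
    have : q ⊔ L ⊔ (s ⊔ L) = (q ⊔ L) ⊔ s := by
      rw [sup_sup_sup_comm, sup_idem, sup_right_comm]
    rw [this, ← sdiff_eq, sup_sdiff_left_self, sdiff_eq, compl_sup, ← inf_assoc]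
  rw [e1, e2, ← inf_sup_right, hA]

private lemma aux_snd {B : Type*} [BooleanAlgebra B] (p q r s L : B)
    (hB : (q ⊔ s) ⊓ (r ⊔ pᶜ) = s) :
    (q ⊔ L ⊔ (s ⊔ L)) ⊓ (p ⊓ Lᶜ ⊓ (r ⊓ Lᶜ) ⊔ (p ⊓ Lᶜ)ᶜ) = s ⊔ L := by
  have e0 : q ⊔ L ⊔ (s ⊔ L) = q ⊔ s ⊔ L := by
    rw [sup_sup_sup_comm, sup_idem]
  have e1 : p ⊓ Lᶜ ⊓ (r ⊓ Lᶜ) ⊔ (p ⊓ Lᶜ)ᶜ = r ⊔ pᶜ ⊔ L := by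
    have h1 : p ⊓ Lᶜ ⊓ (r ⊓ Lᶜ) = p ⊓ (r ⊓ Lᶜ) := by
      rw [inf_assoc, inf_comm Lᶜ, inf_assoc, inf_idem]
    rw [h1, compl_inf, compl_compl, ← sup_assoc, sup_comm _ pᶜ, sup_inf_left,
      compl_sup_eq_top, top_inf_eq, sup_assoc,
      sup_inf_right, compl_sup_eq_top, inf_top_eq, ← sup_assoc, sup_comm pᶜ r]
  rw [e0, e1, ← sup_inf_right, hB]

theorem stmt18 {B : Type*} [BooleanAlgebra B] (a b c : B × B)
    (ha : a.1 ≤ a.2) (hb : b.1 ≤ b.2) (hc : c.1 ≤ c.2)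
    (hbc : isim b c) :
    iimp b a = iimp c a ∧ isim (iimp a b) (iimp a c) := by
  rw [isim] at hbc
  have h1 := congrArg Prod.fst hbc
  have h2 := congrArg Prod.snd hbc
  simp only [idelta, ijoin] at h1 h2
  have eA : (b.2 ⊔ c.2) ⊓ b.2ᶜ = c.2 ⊓ b.2ᶜ := by
    rw [← sdiff_eq, ← sdiff_eq, sup_sdiff_left_self]
  have eB : b.1 ⊓ c.1 ⊔ b.1ᶜ = c.1 ⊔ b.1ᶜ := by
    rw [sup_comm, sup_inf_left, compl_sup_eq_top, top_inf_eq, sup_comm]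
  rw [eA] at h1
  rw [eB] at h2
  have hA : b.1 ⊓ c.1 ⊔ c.2 ⊓ b.2ᶜ = c.1 := h1
  have hB : (b.2 ⊔ c.2) ⊓ (c.1 ⊔ b.1ᶜ) = c.2 := h2
  have hlen : b.1 ⊔ b.2ᶜ = c.1 ⊔ c.2ᶜ := aux_len b.1 b.2 c.1 c.2 hA hB
  constructor
  · simp only [iimp, ilen, hlen]
  · simp only [isim, idelta, ijoin, iimp, ilen, Prod.mk.injEq]
    exact ⟨aux_fst b.1 b.2 c.1 c.2 (a.1 ⊔ a.2ᶜ) hA,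
      aux_snd b.1 b.2 c.1 c.2 (a.1 ⊔ a.2ᶜ) hB⟩
end

section
/- Let a, b, c be intervals of B. Then: (a) (a ⇒ b) ⇒ a = a; (b) (a ⇒ b) ⇒ b = b * a; (c) a ⇒ (b ⇒ c) = b ⇒ (a ⇒ c) (all equalities of intervals, componentwise). -/
theorem stmt19 {B : Type*} [BooleanAlgebra B] (a b c : B × B)
    (ha : a.1 ≤ a.2) (hb : b.1 ≤ b.2) (hc : c.1 ≤ c.2) :
    iimp (iimp a b) a = a ∧
    iimp (iimp a b) b = istar b a ∧
    iimp a (iimp b c) = iimp b (iimp a c) := by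
  obtain ⟨a1, a2⟩ := a; obtain ⟨b1, b2⟩ := b; obtain ⟨c1, c2⟩ := c
  simp only [iimp, istar, ijoin, idelta, ilen, Prod.mk.injEq, compl_sup, compl_inf,
    compl_compl] at *
  refine ⟨⟨?_, ?_⟩, ⟨?_, ?_⟩, ⟨?_, ?_⟩⟩
  · exact inf_eq_left.2 (le_inf (le_sup_of_le_right le_sup_left)
      (le_sup_of_le_right le_sup_left))
  · exact sup_eq_left.2 (sup_le (inf_le_right.trans inf_le_right)
      (inf_le_right.trans inf_le_right))
  · rw [← sup_inf_right, inf_sup_left, inf_sup_left, inf_sup_right, inf_compl_eq_bot, sup_bot_eq,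
      ← inf_assoc, inf_compl_self, bot_inf_eq, bot_sup_eq, inf_sup_left, ← inf_assoc, inf_idem,
      ← inf_assoc, inf_eq_left.2 hb]
  · have L : b2 ⊔ (b1 ⊓ (a1ᶜ ⊓ a2) ⊔ b2ᶜ ⊓ (a1ᶜ ⊓ a2)) = b2 ⊔ a1ᶜ ⊓ a2 := by
      rw [← sup_assoc, sup_eq_left.2 (inf_le_left.trans hb), sup_inf_left, sup_compl_eq_top,
        top_inf_eq]
    have R : b2 ⊔ (b2 ⊔ a2) ⊓ (b1 ⊓ a1 ⊔ a1ᶜ) = b2 ⊔ a1ᶜ ⊓ a2 := by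
      rw [inf_sup_left, ← sup_assoc, sup_eq_left.2 (inf_le_right.trans (inf_le_left.trans hb)),
        inf_sup_right, ← sup_assoc, sup_inf_self, inf_comm]
    exact L.trans R.symm
  · ac_rfl
  · ac_rfl
end
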